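/- Let d = 2k+1 ≥ 5 be an odd integer and k a field. For every 0 ≤ δ ≤ k−1, the binomial w_{(0,0,0)}w_{(2,0,d)}w_{(1,0,δ)} − w_{(1,0,k)}² w_{(1,0,δ+1)} lies in ker ψ but does not lie in the ideal of k[w_x : x ∈ W_d] generated by the quadratic binomials {w_a w_b − w_c w_{d'} : a+b = c+d' in ℤ³}. In particular, for odd d the ideal generated by these quadratic binomials is strictly contained in ker ψ. -/

import Mathlib

open MvPolynomial

/-- `W_d`: triples `(r,γ,δ)` encoding the degree-`d` monomials invariant under the
action of the diagonal matrix `M(1,e,e²,e³)`. -/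
def Wset (d : ℕ) : Set (ℤ × ℤ × ℤ) :=
  {x | 0 ≤ x.1 ∧ x.1 ≤ 3 ∧ 0 ≤ x.2.1 ∧ 0 ≤ x.2.2 ∧
    0 ≤ x.2.2 + 2 * x.2.1 + (1 - x.1) * (d : ℤ) ∧ 2 * x.2.2 + 3 * x.2.1 ≤ x.1 * (d : ℤ)}

/-- The toric parametrization `ψ : k[w_x : x ∈ W_d] → k[x,y,z,t]`,
`w_{(r,γ,δ)} ↦ x^{δ+2γ+(1−r)d} y^{rd−2δ−3γ} z^δ t^γ`. -/
noncomputable def psi (d : ℕ) (K : Type*) [CommSemiring K] :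
    MvPolynomial ↥(Wset d) K →ₐ[K] MvPolynomial (Fin 4) K :=
  aeval fun x =>
    X 0 ^ ((x.val.2.2 + 2 * x.val.2.1 + (1 - x.val.1) * (d : ℤ)).toNat) *
    X 1 ^ ((x.val.1 * (d : ℤ) - 2 * x.val.2.2 - 3 * x.val.2.1).toNat) *
    X 2 ^ (x.val.2.2.toNat) *
    X 3 ^ (x.val.2.1.toNat)

/-!
`ψ` sends `w_x` to a monomial whose exponent vector is an affine function of `x`, so it
identifies two cubic monomials in the `w`'s as soon as their indices have the same sum; here
`(0,0,0) + (2,0,d) + (1,0,δ) = 2 • (1,0,k) + (1,0,δ+1)`.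

For the non-membership, look at the coefficient of the squarefree monomial
`m = w_{(0,0,0)} w_{(2,0,d)} w_{(1,0,δ)}`. Any two of these three indices form a rigid pair: their
sum has no other decomposition as a sum of two points of `W_d` (for `(0,0,0) + (2,0,d)` this is
where the oddness of `d` enters, since `(1,0,d/2)` would otherwise split it). Hence the coefficient
of `m` vanishes on every multiple of a quadratic binomial, so on the whole ideal they generate,
whereas it is `1` in the cubic binomial, whose other monomial is not squarefree.
-/

namespace MvPolynomial

variable {σ R : Type*}

theorem X_mul_X_eq_monomial [CommSemiring R] (a b : σ) :
    (X a * X b : MvPolynomial σ R) = monomial (Finsupp.single a 1 + Finsupp.single b 1) 1 := by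
  rw [X, X, monomial_mul, one_mul]

theorem coeff_eq_zero_of_mem_span [CommSemiring R] {G : Set (MvPolynomial σ R)} {m : σ →₀ ℕ}
    (hG : ∀ g ∈ G, ∀ r, coeff m (r * g) = 0) {f : MvPolynomial σ R} (hf : f ∈ Ideal.span G) :
    coeff m f = 0 := by
  simpa using Submodule.span_induction (p := fun q _ => ∀ r, coeff m (r * q) = 0) hG
    (by simp) (fun x y _ _ hx hy r => by rw [mul_add, coeff_add, hx, hy, add_zero])
    (fun a x _ hx r => by rw [smul_eq_mul, ← mul_assoc, hx]) hf 1

theorem coeff_mul_X_mul_X_sub_X_mul_X_eq_zero [CommRing R] {m : σ →₀ ℕ} {a b c e : σ}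
    (h : Finsupp.single a 1 + Finsupp.single b 1 ≤ m ∨ Finsupp.single c 1 + Finsupp.single e 1 ≤ m →
      s(a, b) = s(c, e))
    (r : MvPolynomial σ R) : coeff m (r * (X a * X b - X c * X e)) = 0 := by
  by_cases hs : s(a, b) = s(c, e)
  · rcases Sym2.eq_iff.mp hs with ⟨rfl, rfl⟩ | ⟨rfl, rfl⟩ <;> simp [mul_comm]
  · obtain ⟨hab, hce⟩ := not_or.mp (mt h hs)
    rw [mul_sub, coeff_sub, X_mul_X_eq_monomial, X_mul_X_eq_monomial, coeff_mul_monomial',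
      coeff_mul_monomial', if_neg hab, if_neg hce, sub_self]

end MvPolynomial

theorem Finsupp.ne_and_mem_of_single_add_single_le {σ : Type*} {u v w a b : σ} (huv : u ≠ v)
    (huw : u ≠ w) (hvw : v ≠ w)
    (h : single a 1 + single b 1 ≤ single u 1 + single v 1 + single w 1) :
    a ≠ b ∧ a ∈ ({u, v, w} : Set σ) ∧ b ∈ ({u, v, w} : Set σ) := by
  classical
  replace h := orderIsoMultiset.monotone h
  simp only [coe_orderIsoMultiset, map_add, toMultiset_single, one_nsmul] at h
  have hnd : ({u} + {v} + {w} : Multiset σ).Nodup := by simp [huv, huw, hvw]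
  have hab := Multiset.nodup_of_le h hnd
  have hs := Multiset.subset_of_le h
  simp_all [Multiset.subset_iff]

def psiExponent (d : ℕ) (x : ℤ × ℤ × ℤ) : Fin 4 → ℤ :=
  ![x.2.2 + 2 * x.2.1 + (1 - x.1) * d, x.1 * d - 2 * x.2.2 - 3 * x.2.1, x.2.2, x.2.1]

theorem psi_X {d : ℕ} {K : Type*} [CommSemiring K] (x : Wset d) :
    psi d K (X x) = ∏ i, X i ^ (psiExponent d x i).toNat := by
  simp [psi, psiExponent, Fin.prod_univ_four]

theorem psiExponent_nonneg {d : ℕ} {x : ℤ × ℤ × ℤ} (hx : x ∈ Wset d) (i : Fin 4) :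
    0 ≤ psiExponent d x i := by
  obtain ⟨-, -, hγ, hδ, hx, hy⟩ := hx
  fin_cases i <;> simp [psiExponent] <;> linarith

theorem psiExponent_add_add (d : ℕ) (x₁ x₂ x₃ : ℤ × ℤ × ℤ) :
    psiExponent d x₁ + psiExponent d x₂ + psiExponent d x₃ =
      psiExponent d (x₁ + x₂ + x₃) + 2 • psiExponent d 0 := by
  ext i; fin_cases i <;> simp [psiExponent] <;> ring

theorem psi_X_mul_X_mul_X_eq {d : ℕ} {K : Type*} [CommSemiring K] {x₁ x₂ x₃ y₁ y₂ y₃ : Wset d}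
    (h : x₁.val + x₂.val + x₃.val = y₁.val + y₂.val + y₃.val) :
    psi d K (X x₁ * X x₂ * X x₃) = psi d K (X y₁ * X y₂ * X y₃) := by
  have hsum := congrFun (by rw [psiExponent_add_add, psiExponent_add_add, h] :
    psiExponent d x₁ + psiExponent d x₂ + psiExponent d x₃ =
      psiExponent d y₁ + psiExponent d y₂ + psiExponent d y₃)
  simp only [map_mul, psi_X, ← Finset.prod_mul_distrib, ← pow_add]
  refine Finset.prod_congr rfl fun i _ => ?_
  have := psiExponent_nonneg x₁.2 i
  have := psiExponent_nonneg x₂.2 i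
  have := psiExponent_nonneg x₃.2 i
  have := psiExponent_nonneg y₁.2 i
  have := psiExponent_nonneg y₂.2 i
  have := psiExponent_nonneg y₃.2 i
  have := hsum i
  simp only [Pi.add_apply] at this
  congr 1
  omega

theorem Wset.sym2_eq_of_add_eq {d δ : ℕ} (hd : Odd d) {a b c e : ℤ × ℤ × ℤ}
    (ha : a ∈ ({(0, 0, 0), (2, 0, (d : ℤ)), (1, 0, (δ : ℤ))} : Set (ℤ × ℤ × ℤ)))
    (hb : b ∈ ({(0, 0, 0), (2, 0, (d : ℤ)), (1, 0, (δ : ℤ))} : Set (ℤ × ℤ × ℤ))) (hab : a ≠ b)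
    (hc : c ∈ Wset d) (he : e ∈ Wset d) (h : a + b = c + e) : s(c, e) = s(a, b) := by
  obtain ⟨k, rfl⟩ := hd
  obtain ⟨c₁, c₂, c₃⟩ := c
  obtain ⟨e₁, e₂, e₃⟩ := e
  obtain ⟨hc₁, hc₁', hc₂, hc₃, hcx, hcy⟩ := hc
  obtain ⟨he₁, he₁', he₂, he₃, hex, hey⟩ := he
  dsimp only at hc₁ hc₁' hc₂ hc₃ hcx hcy he₁ he₁' he₂ he₃ hex hey
  simp only [Set.mem_insert_iff, Set.mem_singleton_iff] at ha hb
  rw [Sym2.eq_iff]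
  rcases ha with rfl | rfl | rfl <;> rcases hb with rfl | rfl | rfl <;>
    simp only [ne_eq, not_true_eq_false, Prod.mk_add_mk, Prod.mk.injEq] at hab h ⊢ <;>
    interval_cases c₁ <;> interval_cases e₁ <;> omega

def quadraticBinomials (d : ℕ) (K : Type*) [CommRing K] : Set (MvPolynomial (Wset d) K) :=
  {f | ∃ a b c e : Wset d, a.val + b.val = c.val + e.val ∧ f = X a * X b - X c * X e}

theorem X_mul_X_mul_X_sub_notMem_span_quadraticBinomials {d δ : ℕ} {K : Type*} [CommRing K]
    [Nontrivial K] (hd : Odd d) {v₀ v₂ v₃ : Wset d} (hv₀ : v₀.val = (0, 0, 0))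
    (hv₂ : v₂.val = (2, 0, (d : ℤ))) (hv₃ : v₃.val = (1, 0, (δ : ℤ))) (u u' : Wset d) :
    X v₀ * X v₂ * X v₃ - X u ^ 2 * X u' ∉ Ideal.span (quadraticBinomials d K) := by
  set m := Finsupp.single v₀ 1 + Finsupp.single v₂ 1 + Finsupp.single v₃ 1
  obtain ⟨h₀₂, h₀₃, h₂₃⟩ : v₀ ≠ v₂ ∧ v₀ ≠ v₃ ∧ v₂ ≠ v₃ := by
    simp [Subtype.ext_iff, hv₀, hv₂, hv₃]
  have hrigid (a b c e : Wset d) (h : a.val + b.val = c.val + e.val)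
      (hle : Finsupp.single a 1 + Finsupp.single b 1 ≤ m) : s(a, b) = s(c, e) := by
    obtain ⟨hab, ha, hb⟩ := Finsupp.ne_and_mem_of_single_add_single_le h₀₂ h₀₃ h₂₃ hle
    have hval : ∀ x ∈ ({v₀, v₂, v₃} : Set (Wset d)),
        x.val ∈ ({(0, 0, 0), (2, 0, (d : ℤ)), (1, 0, (δ : ℤ))} : Set (ℤ × ℤ × ℤ)) := by
      rintro x (rfl | rfl | rfl) <;> simp [hv₀, hv₂, hv₃]
    have := Wset.sym2_eq_of_add_eq hd (hval a ha) (hval b hb)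
      (Subtype.val_injective.ne hab) c.2 e.2 h
    exact (Sym2.map.injective Subtype.val_injective (by simpa using this)).symm
  have hspan : ∀ f ∈ Ideal.span (quadraticBinomials d K), coeff m f = 0 := fun f =>
    coeff_eq_zero_of_mem_span <| by
      rintro _ ⟨a, b, c, e, h, rfl⟩
      exact coeff_mul_X_mul_X_sub_X_mul_X_eq_zero fun hle =>
        hle.elim (hrigid a b c e h) fun hle => (hrigid c e a b h.symm hle).symm
  have hv : coeff m (X v₀ * X v₂ * X v₃ : MvPolynomial (Wset d) K) = 1 := by
    rw [X_mul_X_eq_monomial, X, monomial_mul, one_mul, coeff_monomial, if_pos rfl]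
  have hu : coeff m (X u ^ 2 * X u' : MvPolynomial (Wset d) K) = 0 := by
    rw [sq, mul_comm, X_mul_X_eq_monomial, coeff_mul_monomial',
      if_neg fun h => (Finsupp.ne_and_mem_of_single_add_single_le h₀₂ h₀₃ h₂₃ h).1 rfl]
  intro hmem
  simpa [hv, hu] using hspan _ hmem

theorem stmt9 (K : Type*) [Field K] (d k δ : ℕ)
    (hdk : d = 2 * k + 1) (hδ : δ + 1 ≤ k) :
    ∀ B : MvPolynomial ↥(Wset d) K,
      B = X ⟨((0:ℤ),0,0), by simp only [Wset, Set.mem_setOf_eq]; omega⟩ *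
          X ⟨((2:ℤ),0,(d:ℤ)), by simp only [Wset, Set.mem_setOf_eq]; omega⟩ *
          X ⟨((1:ℤ),0,(δ:ℤ)), by simp only [Wset, Set.mem_setOf_eq]; omega⟩ -
          X ⟨((1:ℤ),0,(k:ℤ)), by simp only [Wset, Set.mem_setOf_eq]; omega⟩ ^ 2 *
          X ⟨((1:ℤ),0,(δ:ℤ)+1), by simp only [Wset, Set.mem_setOf_eq]; omega⟩ →
      psi d K B = 0 ∧
      B ∉ Ideal.span {f : MvPolynomial ↥(Wset d) K |
        ∃ a b c e : ↥(Wset d), a.val + b.val = c.val + e.val ∧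
          f = X a * X b - X c * X e} := by
  rintro B rfl
  constructor
  · rw [map_sub, sub_eq_zero, sq]
    apply psi_X_mul_X_mul_X_eq
    ext <;> simp; omega
  · exact X_mul_X_mul_X_sub_notMem_span_quadraticBinomials ⟨k, hdk⟩ rfl rfl rfl _ _
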